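/- Let n ≥ 6 and let 𝒮₁ be a primitive nonpowerful signed digraph whose underlying digraph is F₁, in which all cycles of length n−1 have the same sign and all cycles of length n−2 have the same sign. Then l_{𝒮₁}(k) = l_{𝒮₁}(v_k) = 2n²−8n+8+k for every 1 ≤ k ≤ n. -/

import Mathlib

/-!
Vertex `v_{i+1}` is `i : Fin n`. Every arc of `F₁` either goes down by one or jumps up, by `n - 2`
(`0 → n-2` and `1 → n-1`) or by `n - 3` (`0 → n-3`). So a walk of length `t` from `u` to `v` with
`a` jumps of the first kind and `b` of the second satisfies `v + t = u + a (n-1) + b (n-2)`.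
Switching every vertex by the sign of the descending path from it down to `0`, and using that the
two `(n-1)`-cycles have the same sign `s₁`, the sign of the walk becomes `s₁ᵃ s₂ᵇ` up to a factor
depending only on its ends, `s₂` being the sign of the `(n-2)`-cycle.

Nonpowerfulness forces `s₁ ^ (n-2) ≠ s₂ ^ (n-1)`, so the powers of the two cycles at `v₁` are
closed walks of length `(n-1)(n-2)` with different signs; with the Frobenius number of
`{n-1, n-2}` this yields SSSD walks from `u` of every length `≥ 2(n-2)² + u + 1`. Conversely, a
walk from `u` to `v_{n-1}` of length `2(n-2)² + u` has `a ≥ 1`, which forces `a = b = n - 2`, so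
all these walks have the same sign.
-/

/-- `f : ℕ → V` traces a directed walk of length `t` in the digraph with
adjacency relation `A` if consecutive vertices are joined by arcs. -/
def IsWalk {V : Type*} (A : V → V → Prop) (t : ℕ) (f : ℕ → V) : Prop :=
  ∀ i < t, A (f i) (f (i + 1))

/-- There is a directed walk of length `t` from `u` to `v`. -/
def HasWalk {V : Type*} (A : V → V → Prop) (t : ℕ) (u v : V) : Prop :=
  ∃ f : ℕ → V, f 0 = u ∧ f t = v ∧ IsWalk A t f

/-- A digraph is strongly connected if every vertex can reach every vertex. -/
def StronglyConnected {V : Type*} (A : V → V → Prop) : Prop :=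
  ∀ u v : V, ∃ t : ℕ, HasWalk A t u v

/-- A digraph is primitive if it is strongly connected and for some `t > 0`
there are directed walks of length `t` between every ordered pair of vertices. -/
def IsPrimitive {V : Type*} (A : V → V → Prop) : Prop :=
  StronglyConnected A ∧ ∃ t : ℕ, 0 < t ∧ ∀ u v : V, HasWalk A t u v

/-- The local exponent at `u`: the least `l` such that for every `t ≥ l` and
every vertex `v` there is a directed walk of length `t` from `u` to `v`. -/
noncomputable def localExp {V : Type*} (A : V → V → Prop) (u : V) : ℕ :=
  sInf {l : ℕ | ∀ t ≥ l, ∀ v : V, HasWalk A t u v}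

/-- `kthSmallest f k` is the `k`-th smallest element (1-indexed) of the
multiset of values of `f`. -/
noncomputable def kthSmallest {n : ℕ} (f : Fin n → ℕ) (k : ℕ) : ℕ :=
  (Multiset.sort (Finset.univ.val.map f) (· ≤ ·)).getD (k - 1) 0

/-- A directed cycle of length `c` (a closed walk whose first `c` vertices are
pairwise distinct), given by its vertex function. -/
def IsCycle {V : Type*} (A : V → V → Prop) (c : ℕ) (f : ℕ → V) : Prop :=
  IsWalk A c f ∧ f c = f 0 ∧ ∀ i < c, ∀ j < c, f i = f j → i = j

/-- A signed digraph: each arc carries a sign `+1` or `-1`. -/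
structure SignedDigraph (V : Type*) where
  Adj : V → V → Prop
  sgn : V → V → ℤ
  sgn_unit : ∀ u v : V, Adj u v → sgn u v = 1 ∨ sgn u v = -1

namespace SignedDigraph

variable {V : Type*} (S : SignedDigraph V)

/-- The sign of the walk of length `t` traced by `f`. -/
def walkSign (t : ℕ) (f : ℕ → V) : ℤ :=
  ∏ i ∈ Finset.range t, S.sgn (f i) (f (i + 1))

/-- There is a pair of SSSD walks of length `t` from `u` to `v`: two walks with
the same endpoints and the same length but different signs. -/
def HasSSSD (t : ℕ) (u v : V) : Prop :=
  ∃ f g : ℕ → V,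
    (f 0 = u ∧ f t = v ∧ IsWalk S.Adj t f) ∧
    (g 0 = u ∧ g t = v ∧ IsWalk S.Adj t g) ∧
    S.walkSign t f ≠ S.walkSign t g

/-- A signed digraph is primitive and nonpowerful if from some length on there
are SSSD walk pairs between all ordered pairs of vertices. -/
def IsPrimitiveNonpowerful : Prop :=
  ∃ l : ℕ, 0 < l ∧ ∀ t ≥ l, ∀ u v : V, S.HasSSSD t u v

/-- The local base at vertex `u`: the least `l` such that for every `t ≥ l` and
every vertex `v` there is a pair of SSSD walks of length `t` from `u` to `v`. -/
noncomputable def localBase (u : V) : ℕ :=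
  sInf {l : ℕ | ∀ t ≥ l, ∀ v : V, S.HasSSSD t u v}

/-- All directed cycles of length `c` in `S` have the same sign. -/
def SameSignCycles (c : ℕ) : Prop :=
  ∀ f g : ℕ → V, IsCycle S.Adj c f → IsCycle S.Adj c g →
    S.walkSign c f = S.walkSign c g

end SignedDigraph

/-- Isomorphism of digraphs. -/
def DigraphIso {V W : Type*} (A : V → V → Prop) (B : W → W → Prop) : Prop :=
  ∃ e : V ≃ W, ∀ u v : V, A u v ↔ B (e u) (e v)

/-- The Hamilton cycle `Cₙ` on `v₁,…,vₙ` (here `vⱼ` is the vertex with 0-based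
index `j-1`), with arcs `v₁ → vₙ` and `vⱼ → v_{j-1}` for `2 ≤ j ≤ n`. -/
def CnAdj (n : ℕ) : Fin n → Fin n → Prop := fun a b =>
  (a.val = 0 ∧ b.val = n - 1) ∨ a.val = b.val + 1

/-- The digraph `D_{k,i}`: the Hamilton cycle `Cₙ` together with the arcs
`vⱼ → v_{n-k+j-1}` for `1 ≤ j ≤ i`. -/
def DkiAdj (n k i : ℕ) : Fin n → Fin n → Prop := fun a b =>
  CnAdj n a b ∨ ∃ j : ℕ, 1 ≤ j ∧ j ≤ i ∧ a.val = j - 1 ∧ b.val = n - k + j - 2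

/-- The digraph `𝓛`: `Cₙ` together with the arcs `v₁ → v_{n-2}` and `v₃ → vₙ`. -/
def LAdj (n : ℕ) : Fin n → Fin n → Prop := fun a b =>
  CnAdj n a b ∨ (a.val = 0 ∧ b.val = n - 3) ∨ (a.val = 2 ∧ b.val = n - 1)

/-- The digraph `F`: the `(n-1)`-cycle `v₁ → vₙ → v_{n-1} → v_{n-3} → ⋯ → v₂ → v₁`
together with the arcs `v₁ → v_{n-2}` and `v_{n-2} → v_{n-3}`. -/
def FAdj (n : ℕ) : Fin n → Fin n → Prop := fun a b =>
  (a.val = 0 ∧ b.val = n - 1) ∨ (a.val = n - 1 ∧ b.val = n - 2) ∨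
  (a.val = n - 2 ∧ b.val = n - 4) ∨ (a.val = b.val + 1 ∧ 1 ≤ a.val ∧ a.val ≤ n - 4) ∨
  (a.val = 0 ∧ b.val = n - 3) ∨ (a.val = n - 3 ∧ b.val = n - 4)

/-- The digraph `F₁`: the `(n-1)`-cycle `v₁ → v_{n-1} → v_{n-2} → ⋯ → v₂ → v₁`
together with the arcs `v₁ → v_{n-2}`, `v₂ → vₙ` and `vₙ → v_{n-1}`. -/
def F1Adj (n : ℕ) : Fin n → Fin n → Prop := fun a b =>
  (a.val = 0 ∧ b.val = n - 2) ∨ (a.val = b.val + 1 ∧ 1 ≤ a.val ∧ a.val ≤ n - 2) ∨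
  (a.val = 0 ∧ b.val = n - 3) ∨ (a.val = 1 ∧ b.val = n - 1) ∨ (a.val = n - 1 ∧ b.val = n - 2)

/-- The digraph `F₂`: the `(n-1)`-cycle `v₁ → vₙ → v_{n-2} → v_{n-3} → ⋯ → v₂ → v₁`
together with the arcs `v₁ → v_{n-2}`, `vₙ → v_{n-1}` and `v_{n-1} → v_{n-3}`. -/
def F2Adj (n : ℕ) : Fin n → Fin n → Prop := fun a b =>
  (a.val = 0 ∧ b.val = n - 1) ∨ (a.val = n - 1 ∧ b.val = n - 3) ∨
  (a.val = b.val + 1 ∧ 1 ≤ a.val ∧ a.val ≤ n - 3) ∨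
  (a.val = 0 ∧ b.val = n - 3) ∨ (a.val = n - 1 ∧ b.val = n - 2) ∨ (a.val = n - 2 ∧ b.val = n - 4)

/-- The digraph `F₃`: the `(n-2)`-cycle `v₁ → v_{n-2} → v_{n-3} → ⋯ → v₂ → v₁`
together with the arcs `v₁ → v_{n-1}`, `v_{n-1} → v_{n-2}`, `v₁ → vₙ` and `vₙ → v_{n-2}`. -/
def F3Adj (n : ℕ) : Fin n → Fin n → Prop := fun a b =>
  (a.val = 0 ∧ b.val = n - 3) ∨ (a.val = b.val + 1 ∧ 1 ≤ a.val ∧ a.val ≤ n - 3) ∨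
  (a.val = 0 ∧ b.val = n - 2) ∨ (a.val = n - 2 ∧ b.val = n - 3) ∨
  (a.val = 0 ∧ b.val = n - 1) ∨ (a.val = n - 1 ∧ b.val = n - 3)

/-- The digraph `F₇`: the `(n-1)`-cycle `v₁ → v_{n-1} → v_{n-2} → ⋯ → v₂ → v₁`
together with the arcs `v₁ → v_{n-2}`, `v₃ → vₙ` and `vₙ → v_{n-1}`. -/
def F7Adj (n : ℕ) : Fin n → Fin n → Prop := fun a b =>
  (a.val = 0 ∧ b.val = n - 2) ∨ (a.val = b.val + 1 ∧ 1 ≤ a.val ∧ a.val ≤ n - 2) ∨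
  (a.val = 0 ∧ b.val = n - 3) ∨ (a.val = 2 ∧ b.val = n - 1) ∨ (a.val = n - 1 ∧ b.val = n - 2)

/-- The digraph `F'ᵢ` (for `2 ≤ i ≤ n-3`): the `(n-1)`-cycle
`v₁ → v_{n-1} → v_{n-2} → ⋯ → v₂ → v₁` together with the arcs `v₁ → v_{n-2}`,
`v_{i+1} → vₙ` and `vₙ → v_{i-1}`. -/
def FpAdj (n i : ℕ) : Fin n → Fin n → Prop := fun a b =>
  (a.val = 0 ∧ b.val = n - 2) ∨ (a.val = b.val + 1 ∧ 1 ≤ a.val ∧ a.val ≤ n - 2) ∨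
  (a.val = 0 ∧ b.val = n - 3) ∨ (a.val = i ∧ b.val = n - 1) ∨ (a.val = n - 1 ∧ b.val = i - 2)

/-- The digraph `𝓑₁`: `Cₙ` together with the arcs `v₁ → v_{n-3}` and `v₃ → v_{n-1}`. -/
def B1Adj (n : ℕ) : Fin n → Fin n → Prop := fun a b =>
  CnAdj n a b ∨ (a.val = 0 ∧ b.val = n - 4) ∨ (a.val = 2 ∧ b.val = n - 2)

/-- The digraph `𝓑₂`: `Cₙ` together with the arcs `v₁ → v_{n-3}` and `v₄ → vₙ`. -/
def B2Adj (n : ℕ) : Fin n → Fin n → Prop := fun a b =>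
  CnAdj n a b ∨ (a.val = 0 ∧ b.val = n - 4) ∨ (a.val = 3 ∧ b.val = n - 1)

/-- The digraph `𝓑₃`: `Cₙ` together with the arcs `v₁ → v_{n-3}`, `v₂ → v_{n-2}`
and `v₄ → vₙ`. -/
def B3Adj (n : ℕ) : Fin n → Fin n → Prop := fun a b =>
  CnAdj n a b ∨ (a.val = 0 ∧ b.val = n - 4) ∨ (a.val = 1 ∧ b.val = n - 3) ∨
  (a.val = 3 ∧ b.val = n - 1)

/-- The digraph `𝓑₄`: `Cₙ` together with the arcs `v₁ → v_{n-3}`, `v₃ → v_{n-1}`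
and `v₄ → vₙ`. -/
def B4Adj (n : ℕ) : Fin n → Fin n → Prop := fun a b =>
  CnAdj n a b ∨ (a.val = 0 ∧ b.val = n - 4) ∨ (a.val = 2 ∧ b.val = n - 2) ∨
  (a.val = 3 ∧ b.val = n - 1)

open Finset

section Walks

variable {V : Type*}

def appendWalk (t : ℕ) (f g : ℕ → V) : ℕ → V := fun i => if i ≤ t then f i else g (i - t)

lemma appendWalk_of_le {t i : ℕ} (f g : ℕ → V) (h : i ≤ t) : appendWalk t f g i = f i :=
  if_pos h

lemma appendWalk_add {t : ℕ} {f g : ℕ → V} (h : f t = g 0) (i : ℕ) :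
    appendWalk t f g (t + i) = g i := by
  unfold appendWalk
  split_ifs with hi
  · obtain rfl : i = 0 := by omega
    simpa using h
  · simp

variable {A : V → V → Prop}

lemma IsWalk.append {t₁ t₂ : ℕ} {f g : ℕ → V} (hf : IsWalk A t₁ f) (hg : IsWalk A t₂ g)
    (h : f t₁ = g 0) : IsWalk A (t₁ + t₂) (appendWalk t₁ f g) := by
  intro i hi
  by_cases hit : i < t₁
  · rw [appendWalk_of_le f g hit.le, appendWalk_of_le f g hit]
    exact hf i hit
  · obtain ⟨j, rfl⟩ := Nat.exists_eq_add_of_le (not_lt.mp hit)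
    rw [add_assoc, appendWalk_add h, appendWalk_add h]
    exact hg j (by omega)

lemma hasWalk_refl (u : V) : HasWalk A 0 u u :=
  ⟨fun _ => u, rfl, rfl, fun _ hi => absurd hi (Nat.not_lt_zero _)⟩

lemma hasWalk_of_adj {u w : V} (h : A u w) : HasWalk A 1 u w :=
  ⟨fun i => if i = 0 then u else w, rfl, rfl, fun i hi => by simpa [show i = 0 by omega] using h⟩

lemma HasWalk.trans {t₁ t₂ : ℕ} {u w v : V} (h₁ : HasWalk A t₁ u w) (h₂ : HasWalk A t₂ w v) :
    HasWalk A (t₁ + t₂) u v := by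
  obtain ⟨f, hf0, hft, hf⟩ := h₁
  obtain ⟨g, hg0, hgt, hg⟩ := h₂
  have h : f t₁ = g 0 := hft.trans hg0.symm
  exact ⟨appendWalk t₁ f g, by rw [appendWalk_of_le f g (Nat.zero_le _), hf0],
    by rw [appendWalk_add h, hgt], hf.append hg h⟩

lemma HasWalk.iterate {c : ℕ} {u : V} (h : HasWalk A c u u) (a : ℕ) : HasWalk A (a * c) u u := by
  induction a with
  | zero => simpa using hasWalk_refl u
  | succ a ih => simpa [add_mul] using ih.trans h

lemma IsWalk.potential_add_length (p : V → ℕ) (d : V → V → ℕ)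
    (hd : ∀ u w, A u w → p w + 1 = p u + d u w) {t : ℕ} {f : ℕ → V} (hf : IsWalk A t f) :
    p (f t) + t = p (f 0) + ∑ i ∈ range t, d (f i) (f (i + 1)) := by
  induction t with
  | zero => simp
  | succ t ih =>
    have harc := hd _ _ (hf t (by omega))
    have := ih fun i hi => hf i (by omega)
    rw [sum_range_succ]
    omega

end Walks

lemma kthSmallest_of_monotone {N : ℕ} {f : Fin N → ℕ} (hf : Monotone f) (i : Fin N) :
    kthSmallest f (i + 1) = f i := by
  unfold kthSmallest
  rw [Fin.univ_val_map, Multiset.coe_sort,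
    List.mergeSort_eq_self (r := fun a b : ℕ => a ≤ b)
      (List.sortedLE_iff_pairwise.1 (List.sortedLE_ofFn_iff.2 hf)),
    List.getD_eq_getElem _ _ (by simp), List.getElem_ofFn]
  rfl

section Frobenius

variable {c x : ℕ}

lemma exists_eq_mul_succ_add_mul_of_le (hc : 0 < c) (hx : c * (c - 1) ≤ x) :
    ∃ a b, x = a * (c + 1) + b * c := by
  have hq : c - 1 ≤ x / c := (Nat.le_div_iff_mul_le hc).2 (by rw [mul_comm]; exact hx)
  have hr := Nat.mod_lt x hc
  obtain ⟨d, hd⟩ := Nat.exists_eq_add_of_le (show x % c ≤ x / c by omega)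
  refine ⟨x % c, d, ?_⟩
  have := Nat.div_add_mod x c
  rw [hd] at this
  linarith

lemma exists_eq_mul_succ_add_mul_or_succ (hc : 0 < c) (hx : c * (c - 2) ≤ x) :
    (∃ a b, x = a * (c + 1) + b * c) ∨ ∃ a b, x + 1 = a * (c + 1) + b * c := by
  have hq : c - 2 ≤ x / c := (Nat.le_div_iff_mul_le hc).2 (by rw [mul_comm]; exact hx)
  have hr := Nat.mod_lt x hc
  have hx' := Nat.div_add_mod x c
  by_cases hrq : x % c ≤ x / c
  · obtain ⟨d, hd⟩ := Nat.exists_eq_add_of_le hrq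
    left
    refine ⟨x % c, d, ?_⟩
    rw [hd] at hx'
    linarith
  · right
    refine ⟨0, x / c + 1, ?_⟩
    have : x % c + 1 = c := by omega
    linarith

lemma eq_of_mul_succ_add_mul_eq {a b : ℕ} (hc : 0 < c) (ha : 1 ≤ a)
    (h : a * (c + 1) + b * c = c * (2 * c + 1)) : a = c ∧ b = c := by
  obtain ⟨k, rfl⟩ : c ∣ a := by
    rw [← Nat.dvd_add_right (dvd_mul_right c (a + b)), show c * (a + b) + a = c * (2 * c + 1) by
      linarith]
    exact dvd_mul_right _ _
  have hk : k * (c + 1) + b = 2 * c + 1 :=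
    Nat.eq_of_mul_eq_mul_left hc (by linarith)
  have hk1 : k = 1 := by
    rcases Nat.lt_or_ge k 2 with h | h
    · have : k ≠ 0 := by rintro rfl; simp at ha
      omega
    · nlinarith
  subst hk1
  omega

end Frobenius

lemma eq_pow_of_pow_eq_pow_succ {M : Type*} [CommMonoid M] {x y : M} {c : ℕ} (hx : x ^ 2 = 1)
    (hy : y ^ 2 = 1) (h : x ^ c = y ^ (c + 1)) : x = (x * y) ^ (c + 1) ∧ y = (x * y) ^ c := by
  constructor
  · rw [mul_pow, ← h, ← pow_add, show c + 1 + c = 2 * c + 1 by ring, pow_succ, pow_mul, hx,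
      one_pow, one_mul]
  · rw [mul_pow, h, ← pow_add, show c + 1 + c = 2 * c + 1 by ring, pow_succ, pow_mul, hy,
      one_pow, one_mul]

namespace SignedDigraph

variable {V : Type*} (S : SignedDigraph V)

def HasSignedWalk (t : ℕ) (u v : V) (σ : ℤ) : Prop :=
  ∃ f : ℕ → V, f 0 = u ∧ f t = v ∧ IsWalk S.Adj t f ∧ S.walkSign t f = σ

lemma sgn_mul_self {u w : V} (h : S.Adj u w) : S.sgn u w * S.sgn u w = 1 := by
  rcases S.sgn_unit u w h with h | h <;> rw [h] <;> norm_num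

lemma walkSign_mul_self {t : ℕ} {f : ℕ → V} (hf : IsWalk S.Adj t f) :
    S.walkSign t f * S.walkSign t f = 1 := by
  rw [walkSign, ← prod_mul_distrib]
  exact prod_eq_one fun i hi => S.sgn_mul_self (hf i (mem_range.1 hi))

lemma walkSign_succ' (t : ℕ) (f : ℕ → V) :
    S.walkSign (t + 1) f = S.sgn (f 0) (f 1) * S.walkSign t (fun i => f (i + 1)) := by
  rw [walkSign, prod_range_succ', mul_comm]
  rfl

lemma walkSign_append {t₁ t₂ : ℕ} {f g : ℕ → V} (h : f t₁ = g 0) :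
    S.walkSign (t₁ + t₂) (appendWalk t₁ f g) = S.walkSign t₁ f * S.walkSign t₂ g := by
  rw [walkSign, prod_range_add]
  congr 1
  · refine prod_congr rfl fun i hi => ?_
    rw [appendWalk_of_le f g (mem_range.1 hi).le, appendWalk_of_le f g (mem_range.1 hi)]
  · refine prod_congr rfl fun i _ => ?_
    rw [add_assoc, appendWalk_add h, appendWalk_add h]

lemma walkSign_eq_of_switching (g : V → ℤ) (c : V → V → ℤ) (hg : ∀ v, g v * g v = 1)
    (hc : ∀ u w, S.Adj u w → S.sgn u w = g u * g w * c u w) {t : ℕ} {f : ℕ → V}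
    (hf : IsWalk S.Adj t f) :
    S.walkSign t f = g (f 0) * g (f t) * ∏ i ∈ range t, c (f i) (f (i + 1)) := by
  induction t with
  | zero => simp [walkSign, hg]
  | succ t ih =>
    rw [walkSign, prod_range_succ, ← walkSign, ih fun i hi => hf i (by omega),
      hc _ _ (hf t (by omega)), prod_range_succ]
    linear_combination (g (f 0) * g (f (t + 1)) * (∏ i ∈ range t, c (f i) (f (i + 1))) *
      c (f t) (f (t + 1))) * hg (f t)

lemma exists_hasSignedWalk {t : ℕ} {u v : V} (h : HasWalk S.Adj t u v) :
    ∃ σ, S.HasSignedWalk t u v σ := by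
  obtain ⟨f, hf0, hft, hf⟩ := h
  exact ⟨_, f, hf0, hft, hf, rfl⟩

lemma hasSSSD_of_ne {t : ℕ} {u v : V} {σ τ : ℤ} (h₁ : S.HasSignedWalk t u v σ)
    (h₂ : S.HasSignedWalk t u v τ) (hne : σ ≠ τ) : S.HasSSSD t u v := by
  obtain ⟨f, hf0, hft, hf, rfl⟩ := h₁
  obtain ⟨g, hg0, hgt, hg, rfl⟩ := h₂
  exact ⟨f, g, ⟨hf0, hft, hf⟩, ⟨hg0, hgt, hg⟩, hne⟩

section

variable {S}

lemma HasSignedWalk.trans {t₁ t₂ : ℕ} {u w v : V} {σ τ : ℤ} (h₁ : S.HasSignedWalk t₁ u w σ)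
    (h₂ : S.HasSignedWalk t₂ w v τ) : S.HasSignedWalk (t₁ + t₂) u v (σ * τ) := by
  obtain ⟨f, hf0, hft, hf, rfl⟩ := h₁
  obtain ⟨g, hg0, hgt, hg, rfl⟩ := h₂
  have h : f t₁ = g 0 := hft.trans hg0.symm
  exact ⟨appendWalk t₁ f g, by rw [appendWalk_of_le f g (Nat.zero_le _), hf0],
    by rw [appendWalk_add h, hgt], hf.append hg h, S.walkSign_append h⟩

lemma hasSignedWalk_zero (u : V) : S.HasSignedWalk 0 u u 1 :=
  ⟨fun _ => u, rfl, rfl, fun _ hi => absurd hi (Nat.not_lt_zero _), by simp [walkSign]⟩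

lemma HasSignedWalk.pow {c : ℕ} {u : V} {σ : ℤ} (h : S.HasSignedWalk c u u σ) (a : ℕ) :
    S.HasSignedWalk (a * c) u u (σ ^ a) := by
  induction a with
  | zero => simpa using S.hasSignedWalk_zero u
  | succ a ih => simpa [add_mul, pow_succ] using ih.trans h

lemma HasSignedWalk.mul_self {t : ℕ} {u v : V} {σ : ℤ} (h : S.HasSignedWalk t u v σ) :
    σ * σ = 1 := by
  obtain ⟨f, -, -, hf, rfl⟩ := h
  exact S.walkSign_mul_self hf

lemma HasSignedWalk.ne_zero {t : ℕ} {u v : V} {σ : ℤ} (h : S.HasSignedWalk t u v σ) : σ ≠ 0 :=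
  left_ne_zero_of_mul_eq_one h.mul_self

end

lemma hasSSSD_of_hub {e c e' : ℕ} {u x v : V} {σ₁ σ₂ : ℤ} (hin : HasWalk S.Adj e u x)
    (h₁ : S.HasSignedWalk c x x σ₁) (h₂ : S.HasSignedWalk c x x σ₂) (hne : σ₁ ≠ σ₂)
    (hout : HasWalk S.Adj e' x v) : S.HasSSSD (e + c + e') u v := by
  obtain ⟨σ, hσ⟩ := S.exists_hasSignedWalk hin
  obtain ⟨τ, hτ⟩ := S.exists_hasSignedWalk hout
  refine S.hasSSSD_of_ne ((hσ.trans h₁).trans hτ) ((hσ.trans h₂).trans hτ) ?_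
  rw [Ne, mul_left_inj' hτ.ne_zero, mul_right_inj' hσ.ne_zero]
  exact hne

lemma localBase_eq_succ {u : V} {l : ℕ} (h : ∀ t, l + 1 ≤ t → ∀ v, S.HasSSSD t u v) {v : V}
    (h' : ¬ S.HasSSSD l u v) : S.localBase u = l + 1 := by
  have hmem : l + 1 ∈ {l : ℕ | ∀ t ≥ l, ∀ v : V, S.HasSSSD t u v} := h
  refine le_antisymm (Nat.sInf_le hmem) (le_csInf ⟨_, hmem⟩ fun b hb => ?_)
  by_contra! hb'
  exact h' (hb l (by omega) v)

end SignedDigraph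

section F1

variable {n : ℕ}

def jump (d : ℕ) (u w : Fin n) : ℕ := if w.val = u.val + d then 1 else 0

def jumpCount (d t : ℕ) (f : ℕ → Fin n) : ℕ := ∑ i ∈ range t, jump d (f i) (f (i + 1))

/-- The closed walk `a → b → b - 1 → ⋯ → a + 1 → a`. -/
def jumpCycle (a b : Fin n) (i : ℕ) : Fin n :=
  if h : i = 0 then a else ⟨b + 1 - i, by have := b.isLt; omega⟩

lemma jumpCycle_zero (a b : Fin n) : jumpCycle a b 0 = a := rfl

lemma val_jumpCycle {a b : Fin n} {i : ℕ} (hi : i ≠ 0) : (jumpCycle a b i).val = b + 1 - i := by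
  simp [jumpCycle, hi]

lemma F1Adj_iff (u w : Fin n) :
    F1Adj n u w ↔ u.val = w.val + 1 ∨ (u.val = 0 ∧ w.val = n - 2) ∨
      (u.val = 0 ∧ w.val = n - 3) ∨ (u.val = 1 ∧ w.val = n - 1) := by
  have := u.isLt
  unfold F1Adj
  omega

namespace F1Adj

lemma of_val_eq_succ {u w : Fin n} (h : u.val = w.val + 1) : F1Adj n u w :=
  (F1Adj_iff u w).2 (Or.inl h)

lemma val_add_one {u w : Fin n} (hn : 3 ≤ n) (h : F1Adj n u w) :
    w.val + 1 = u.val + ((n - 1) * jump (n - 2) u w + (n - 2) * jump (n - 3) u w) := by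
  rw [F1Adj_iff] at h
  unfold jump
  split_ifs <;> omega

/-- A jump up by `n - 2` closes an `(n-1)`-cycle, one up by `n - 3` an `(n-2)`-cycle. -/
lemma val_add_length {t : ℕ} {f : ℕ → Fin n} (hn : 3 ≤ n) (hf : IsWalk (F1Adj n) t f) :
    (f t).val + t =
      (f 0).val + (n - 1) * jumpCount (n - 2) t f + (n - 2) * jumpCount (n - 3) t f := by
  rw [hf.potential_add_length Fin.val _ fun u w h => h.val_add_one hn, sum_add_distrib,
    ← mul_sum, ← mul_sum, add_assoc]
  rfl

lemma one_le_jumpCount {t : ℕ} {f : ℕ → Fin n} (hf : IsWalk (F1Adj n) (t + 2) f)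
    (hend : (f (t + 2)).val = n - 2) : 1 ≤ jumpCount (n - 2) (t + 2) f := by
  have hle : ∀ i < t + 2, jump (n - 2) (f i) (f (i + 1)) ≤ jumpCount (n - 2) (t + 2) f :=
    fun i hi => single_le_sum (f := fun i => jump (n - 2) (f i) (f (i + 1)))
      (fun _ _ => Nat.zero_le _) (mem_range.2 hi)
  have hlast := (F1Adj_iff (f (t + 1)) (f (t + 2))).1 (hf (t + 1) (by omega))
  have hprev := (F1Adj_iff _ _).1 (hf t (by omega))
  have hlt := (f t).isLt
  -- `n - 2` is entered by the jump from `0` or from `n - 1`, which only the jump from `1` enters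
  have key : jump (n - 2) (f t) (f (t + 1)) = 1 ∨ jump (n - 2) (f (t + 1)) (f (t + 2)) = 1 := by
    unfold jump
    split_ifs <;> omega
  rcases key with key | key
  · exact key ▸ hle t (by omega)
  · exact key ▸ hle (t + 1) (by omega)

lemma jumpCount_eq_of_critical (hn : 4 ≤ n) {f : ℕ → Fin n}
    (hf : IsWalk (F1Adj n) (2 * (n - 2) ^ 2 + (f 0).val) f)
    (hend : (f (2 * (n - 2) ^ 2 + (f 0).val)).val = n - 2) :
    jumpCount (n - 2) (2 * (n - 2) ^ 2 + (f 0).val) f = n - 2 ∧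
      jumpCount (n - 3) (2 * (n - 2) ^ 2 + (f 0).val) f = n - 2 := by
  have hlen := val_add_length (by omega) hf
  obtain ⟨t, ht⟩ : ∃ t, 2 * (n - 2) ^ 2 + (f 0).val = t + 2 :=
    ⟨2 * (n - 2) ^ 2 + (f 0).val - 2, by have := Nat.one_le_pow 2 (n - 2) (by omega); omega⟩
  have hone := one_le_jumpCount (ht ▸ hf) (ht ▸ hend)
  rw [← ht] at hone
  rw [hend] at hlen
  refine eq_of_mul_succ_add_mul_eq (by omega) hone ?_
  rw [show n - 2 + 1 = n - 1 by omega]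
  nlinarith

lemma isCycle_jumpCycle {a b : Fin n} (hab : F1Adj n a b) (h : a < b) :
    IsCycle (F1Adj n) (b - a + 1) (jumpCycle a b) := by
  have hab' : a.val < b.val := h
  refine ⟨fun i hi => ?_, ?_, fun i hi j hj hij => ?_⟩
  · rcases Nat.eq_zero_or_pos i with rfl | hi0
    · have h1 : jumpCycle a b 1 = b := Fin.ext (by rw [val_jumpCycle one_ne_zero]; omega)
      simpa [jumpCycle_zero, h1] using hab
    · apply of_val_eq_succ
      rw [val_jumpCycle (by omega), val_jumpCycle (by omega)]
      omega
  · exact Fin.ext (by rw [val_jumpCycle (by omega), jumpCycle_zero]; omega)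
  · have hv := congrArg Fin.val hij
    rcases Nat.eq_zero_or_pos i with rfl | hi0 <;> rcases Nat.eq_zero_or_pos j with rfl | hj0
    · rfl
    · rw [jumpCycle_zero, val_jumpCycle hj0.ne'] at hv; omega
    · rw [jumpCycle_zero, val_jumpCycle hi0.ne'] at hv; omega
    · rw [val_jumpCycle hi0.ne', val_jumpCycle hj0.ne'] at hv; omega

lemma hasWalk_desc {u w : Fin n} (h : w.val ≤ u.val) : HasWalk (F1Adj n) (u.val - w.val) u w :=
  ⟨fun i => ⟨u - i, by omega⟩, rfl, Fin.ext (by simp; omega),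
    fun i hi => of_val_eq_succ (by simp; omega)⟩

lemma hasWalk_jumpCycle {a b : Fin n} (hab : F1Adj n a b) (h : a < b) :
    HasWalk (F1Adj n) (b - a + 1) a a :=
  ⟨_, rfl, (isCycle_jumpCycle hab h).2.1, (isCycle_jumpCycle hab h).1⟩

lemma hasWalk_zero_zero (hn : 4 ≤ n) (a b : ℕ) :
    HasWalk (F1Adj n) (a * (n - 1) + b * (n - 2)) ⟨0, by omega⟩ ⟨0, by omega⟩ := by
  have hlong := hasWalk_jumpCycle (n := n) (a := ⟨0, by omega⟩) (b := ⟨n - 2, by omega⟩)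
    ((F1Adj_iff _ _).2 (by simp)) (Fin.mk_lt_mk.2 (by omega))
  have hshort := hasWalk_jumpCycle (n := n) (a := ⟨0, by omega⟩) (b := ⟨n - 3, by omega⟩)
    ((F1Adj_iff _ _).2 (by simp)) (Fin.mk_lt_mk.2 (by omega))
  simp only [Nat.sub_zero, show n - 2 + 1 = n - 1 by omega, show n - 3 + 1 = n - 2 by omega]
    at hlong hshort
  exact (hlong.iterate a).trans (hshort.iterate b)

lemma hasWalk_zero_zero_of_le (hn : 4 ≤ n) {y : ℕ} (hy : (n - 2) * (n - 3) ≤ y) :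
    HasWalk (F1Adj n) y ⟨0, by omega⟩ ⟨0, by omega⟩ := by
  obtain ⟨a, b, hab⟩ := exists_eq_mul_succ_add_mul_of_le (c := n - 2) (x := y) (by omega)
    (by rwa [show n - 2 - 1 = n - 3 by omega])
  rw [show n - 2 + 1 = n - 1 by omega] at hab
  exact hab ▸ hasWalk_zero_zero hn a b

lemma exists_hasWalk_from_zero_succ (hn : 4 ≤ n) {v : Fin n} (hv0 : v.val ≠ 0)
    (hv : v.val ≠ n - 2) : ∃ e ≤ n - 2,
      HasWalk (F1Adj n) e ⟨0, by omega⟩ v ∧ HasWalk (F1Adj n) (e + 1) ⟨0, by omega⟩ v := by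
  have hdown : ∀ w : Fin n, 1 ≤ w.val → w.val ≤ n - 3 →
      HasWalk (F1Adj n) (n - 2 - w) ⟨0, by omega⟩ w ∧
        HasWalk (F1Adj n) (n - 2 - w + 1) ⟨0, by omega⟩ w := by
    intro w hw1 hw
    have hshort := (hasWalk_of_adj (A := F1Adj n) (u := ⟨0, by omega⟩) (w := ⟨n - 3, by omega⟩)
      ((F1Adj_iff _ _).2 (by simp))).trans (hasWalk_desc (w := w) (show w.val ≤ n - 3 from hw))
    have hlong := (hasWalk_of_adj (A := F1Adj n) (u := ⟨0, by omega⟩) (w := ⟨n - 2, by omega⟩)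
      ((F1Adj_iff _ _).2 (by simp))).trans
        (hasWalk_desc (w := w) (show w.val ≤ n - 2 by omega))
    exact ⟨(show 1 + (n - 3 - w) = n - 2 - w by omega) ▸ hshort,
      (show 1 + (n - 2 - w) = n - 2 - w + 1 by omega) ▸ hlong⟩
  by_cases hvn : v.val ≤ n - 3
  · exact ⟨n - 2 - v, by omega, hdown v (by omega) hvn⟩
  · obtain ⟨h₁, h₂⟩ := hdown ⟨1, by omega⟩ le_rfl (by simp; omega)
    have harc := hasWalk_of_adj (A := F1Adj n) (u := ⟨1, by omega⟩) (w := v)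
      ((F1Adj_iff _ _).2 (by simp; omega))
    exact ⟨n - 2 - 1 + 1, by omega, h₁.trans harc, h₂.trans harc⟩

lemma hasWalk_from_zero (hn : 4 ≤ n) (v : Fin n) {y : ℕ} (hy : (n - 2) * (n - 3) < y) :
    HasWalk (F1Adj n) y ⟨0, by omega⟩ v := by
  by_cases hv0 : v.val = 0
  · exact (Fin.ext hv0.symm : (⟨0, by omega⟩ : Fin n) = v) ▸ hasWalk_zero_zero_of_le hn hy.le
  by_cases hv : v.val = n - 2
  · have harc := hasWalk_of_adj (A := F1Adj n) (u := ⟨0, by omega⟩) (w := v)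
      ((F1Adj_iff _ _).2 (by simp [hv]))
    exact (show y - 1 + 1 = y by omega) ▸ (hasWalk_zero_zero_of_le hn (by omega)).trans harc
  obtain ⟨e, he, h₁, h₂⟩ := exists_hasWalk_from_zero_succ hn hv0 hv
  obtain ⟨hye, hx⟩ : e + 1 ≤ y ∧ (n - 2) * (n - 2 - 2) ≤ y - (e + 1) := by
    obtain ⟨c, rfl⟩ : ∃ c, n = c + 4 := ⟨n - 4, by omega⟩
    simp only [show c + 4 - 2 = c + 2 from rfl, show c + 4 - 3 = c + 1 from rfl,
      show c + 2 - 2 = c from rfl] at hy he ⊢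
    have : (c + 2) * (c + 1) = (c + 2) * c + (c + 2) := by ring
    constructor <;> omega
  rcases exists_eq_mul_succ_add_mul_or_succ (by omega) hx with ⟨a, b, hab⟩ | ⟨a, b, hab⟩
  · rw [show n - 2 + 1 = n - 1 by omega] at hab
    exact (show y - (e + 1) + (e + 1) = y by omega) ▸ (hab ▸ hasWalk_zero_zero hn a b).trans h₂
  · rw [show n - 2 + 1 = n - 1 by omega] at hab
    exact (show y - (e + 1) + 1 + e = y by omega) ▸ (hab ▸ hasWalk_zero_zero hn a b).trans h₁

end F1Adj

end F1

namespace SignedDigraph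

variable {n : ℕ} (S : SignedDigraph (Fin n))

/-- The sign of the arc `i → j`, read on vertex indices (junk value `1` out of range). -/
def arcSign (i j : ℕ) : ℤ := if h : i < n ∧ j < n then S.sgn ⟨i, h.1⟩ ⟨j, h.2⟩ else 1

/-- The sign of the descending path `b → b - 1 → ⋯ → a`. -/
def descSign (a b : ℕ) : ℤ := ∏ i ∈ Ico a b, S.arcSign (i + 1) i

def cycleSign (a b : ℕ) : ℤ := S.arcSign a b * S.descSign a b

lemma descSign_self (a : ℕ) : S.descSign a a = 1 := by
  simp [descSign]

lemma descSign_of_lt {a b : ℕ} (h : a < b) :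
    S.descSign a b = S.arcSign (a + 1) a * S.descSign (a + 1) b :=
  prod_eq_prod_Ico_succ_bot h _

lemma descSign_succ {a b : ℕ} (h : a ≤ b) :
    S.descSign a (b + 1) = S.descSign a b * S.arcSign (b + 1) b :=
  prod_Ico_succ_top h _

lemma sgn_eq_arcSign (u w : Fin n) : S.sgn u w = S.arcSign u w := by
  simp [arcSign]

lemma walkSign_eq_descSign {k b : ℕ} {f : ℕ → Fin n} (hf : ∀ i ≤ k, (f i).val = b - i)
    (hk : k ≤ b) : S.walkSign k f = S.descSign (b - k) b := by
  induction k with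
  | zero => simp [walkSign, descSign]
  | succ k ih =>
    rw [walkSign, prod_range_succ, ← walkSign, ih (fun i hi => hf i (by omega)) (by omega),
      sgn_eq_arcSign, hf k (by omega), hf (k + 1) le_rfl, S.descSign_of_lt (a := b - (k + 1))
      (by omega), show b - (k + 1) + 1 = b - k by omega, mul_comm]

lemma walkSign_jumpCycle {a b : Fin n} (h : a ≤ b) :
    S.walkSign (b - a + 1) (jumpCycle a b) = S.cycleSign a b := by
  rw [walkSign_succ', S.walkSign_eq_descSign (b := b) (fun i _ => by
    rw [val_jumpCycle (by omega)]; omega) (by omega), sgn_eq_arcSign, jumpCycle_zero,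
    show jumpCycle a b 1 = b from Fin.ext (by rw [val_jumpCycle one_ne_zero]; omega),
    show b.val - (b - a) = a by have : a.val ≤ b.val := h; omega]
  rfl

lemma hasSignedWalk_jumpCycle (hadj : S.Adj = F1Adj n) {a b : Fin n} (hab : F1Adj n a b)
    (h : a < b) : S.HasSignedWalk (b - a + 1) a a (S.cycleSign a b) :=
  ⟨_, rfl, (F1Adj.isCycle_jumpCycle hab h).2.1, hadj ▸ (F1Adj.isCycle_jumpCycle hab h).1,
    S.walkSign_jumpCycle h.le⟩

lemma arcSign_succ_mul_self (hadj : S.Adj = F1Adj n) {i : ℕ} (hi : i + 1 < n) :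
    S.arcSign (i + 1) i * S.arcSign (i + 1) i = 1 := by
  have h := S.sgn_mul_self (u := ⟨i + 1, hi⟩) (w := ⟨i, by omega⟩)
    (hadj ▸ F1Adj.of_val_eq_succ rfl)
  rwa [sgn_eq_arcSign] at h

lemma descSign_mul_self (hadj : S.Adj = F1Adj n) {a b : ℕ} (hb : b < n) :
    S.descSign a b * S.descSign a b = 1 := by
  rw [descSign, ← prod_mul_distrib]
  exact prod_eq_one fun i hi => S.arcSign_succ_mul_self hadj (by simp at hi; omega)

/-- `jumpCycle 1 (n-1)` and `jumpCycle 0 (n-2)` are the two `(n-1)`-cycles of `F₁`. -/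
lemma cycleSign_one_eq (hadj : S.Adj = F1Adj n) (hn : 4 ≤ n) (h1 : S.SameSignCycles (n - 1)) :
    S.cycleSign 1 (n - 1) = S.cycleSign 0 (n - 2) := by
  have hC₁ := F1Adj.isCycle_jumpCycle (n := n) (a := ⟨1, by omega⟩) (b := ⟨n - 1, by omega⟩)
    ((F1Adj_iff _ _).2 (by simp)) (Fin.mk_lt_mk.2 (by omega))
  have hC₀ := F1Adj.isCycle_jumpCycle (n := n) (a := ⟨0, by omega⟩) (b := ⟨n - 2, by omega⟩)
    ((F1Adj_iff _ _).2 (by simp)) (Fin.mk_lt_mk.2 (by omega))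
  have h₁ := S.walkSign_jumpCycle (a := ⟨1, by omega⟩) (b := ⟨n - 1, by omega⟩)
    (Fin.mk_le_mk.2 (by omega))
  have h₀ := S.walkSign_jumpCycle (a := ⟨0, by omega⟩) (b := ⟨n - 2, by omega⟩)
    (Fin.mk_le_mk.2 (by omega))
  simp only [show n - 1 - 1 + 1 = n - 1 by omega, show n - 2 - 0 + 1 = n - 1 by omega]
    at hC₁ hC₀ h₁ h₀
  rw [← h₁, ← h₀]
  exact h1 _ _ (hadj ▸ hC₁) (hadj ▸ hC₀)

/-- Switching at every vertex `v` by the sign of the path `v → ⋯ → 0`: only the jumps keep a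
sign, that of the cycle they close. The jump `1 → n - 1` closes `jumpCycle 1 (n-1)`, which has
the sign of `jumpCycle 0 (n-2)`. -/
lemma sgn_eq_of_adj (hadj : S.Adj = F1Adj n) (hn : 4 ≤ n)
    (hrel : S.cycleSign 1 (n - 1) = S.cycleSign 0 (n - 2)) {u w : Fin n} (h : S.Adj u w) :
    S.sgn u w = S.descSign 0 u * S.descSign 0 w *
      (S.cycleSign 0 (n - 2) ^ jump (n - 2) u w * S.cycleSign 0 (n - 3) ^ jump (n - 3) u w) := by
  have hw := w.isLt
  rw [sgn_eq_arcSign]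
  unfold jump
  rcases (F1Adj_iff u w).1 (hadj ▸ h) with huw | ⟨hu, hw'⟩ | ⟨hu, hw'⟩ | ⟨hu, hw'⟩
  · rw [if_neg (by omega), if_neg (by omega), huw, S.descSign_succ (Nat.zero_le _)]
    linear_combination (-S.arcSign (w + 1) w) * S.descSign_mul_self hadj (a := 0) hw
  · rw [if_pos (by omega), if_neg (by omega), hu, hw', cycleSign, descSign_self]
    linear_combination (-S.arcSign 0 (n - 2)) * S.descSign_mul_self hadj (a := 0) (b := n - 2)
      (by omega)
  · rw [if_neg (by omega), if_pos (by omega), hu, hw', pow_zero, cycleSign, descSign_self]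
    linear_combination (-S.arcSign 0 (n - 3)) * S.descSign_mul_self hadj (a := 0) (b := n - 3)
      (by omega)
  · rw [if_pos (by omega), if_neg (by omega), hu, hw', ← hrel, cycleSign,
      S.descSign_of_lt (a := 0) (b := 1) one_pos, S.descSign_of_lt (a := 0) (b := n - 1) (by omega),
      descSign_self]
    linear_combination (-S.arcSign 1 (n - 1)) * S.arcSign_succ_mul_self hadj (i := 0) (by omega)
      + (-S.arcSign 1 (n - 1) * S.arcSign 1 0 * S.arcSign 1 0) *
        S.descSign_mul_self hadj (a := 1) (b := n - 1) (by omega)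

lemma walkSign_eq (hadj : S.Adj = F1Adj n) (hn : 4 ≤ n)
    (hrel : S.cycleSign 1 (n - 1) = S.cycleSign 0 (n - 2)) {t : ℕ} {f : ℕ → Fin n}
    (hf : IsWalk S.Adj t f) :
    S.walkSign t f = S.descSign 0 (f 0) * S.descSign 0 (f t) *
      (S.cycleSign 0 (n - 2) ^ jumpCount (n - 2) t f *
        S.cycleSign 0 (n - 3) ^ jumpCount (n - 3) t f) := by
  rw [S.walkSign_eq_of_switching _ _ (fun v => S.descSign_mul_self hadj (a := 0) v.isLt)
    (fun u w h => S.sgn_eq_of_adj hadj hn hrel h) hf, prod_mul_distrib, prod_pow_eq_pow_sum,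
    prod_pow_eq_pow_sum]
  rfl

lemma hasSignedWalk_longCycle (hadj : S.Adj = F1Adj n) (hn : 4 ≤ n) :
    S.HasSignedWalk (n - 1) ⟨0, by omega⟩ ⟨0, by omega⟩ (S.cycleSign 0 (n - 2)) := by
  have h := S.hasSignedWalk_jumpCycle hadj (a := ⟨0, by omega⟩) (b := ⟨n - 2, by omega⟩)
    ((F1Adj_iff _ _).2 (by simp)) (Fin.mk_lt_mk.2 (by omega))
  rwa [show n - 2 - 0 + 1 = n - 1 by omega] at h

lemma hasSignedWalk_shortCycle (hadj : S.Adj = F1Adj n) (hn : 4 ≤ n) :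
    S.HasSignedWalk (n - 2) ⟨0, by omega⟩ ⟨0, by omega⟩ (S.cycleSign 0 (n - 3)) := by
  have h := S.hasSignedWalk_jumpCycle hadj (a := ⟨0, by omega⟩) (b := ⟨n - 3, by omega⟩)
    ((F1Adj_iff _ _).2 (by simp)) (Fin.mk_lt_mk.2 (by omega))
  rwa [show n - 3 - 0 + 1 = n - 2 by omega] at h

/-- If `s₁ ^ (n-2) = s₂ ^ (n-1)`, then `s₁ = ε ^ (n-1)` and `s₂ = ε ^ (n-2)` with `ε = s₁ s₂`, so
every closed walk at `v₁` of length `l` has sign `ε ^ l`. -/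
lemma cycleSign_pow_ne (hadj : S.Adj = F1Adj n) (hn : 4 ≤ n)
    (hrel : S.cycleSign 1 (n - 1) = S.cycleSign 0 (n - 2)) (hpn : S.IsPrimitiveNonpowerful) :
    S.cycleSign 0 (n - 2) ^ (n - 2) ≠ S.cycleSign 0 (n - 3) ^ (n - 1) := by
  intro h
  obtain ⟨h₁, h₂⟩ := eq_pow_of_pow_eq_pow_succ
    ((pow_two _).trans (S.hasSignedWalk_longCycle hadj hn).mul_self)
    ((pow_two _).trans (S.hasSignedWalk_shortCycle hadj hn).mul_self)
    (by rwa [show n - 2 + 1 = n - 1 by omega])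
  rw [show n - 2 + 1 = n - 1 by omega] at h₁
  generalize S.cycleSign 0 (n - 2) * S.cycleSign 0 (n - 3) = ε at h₁ h₂
  obtain ⟨l, -, hl⟩ := hpn
  have hclosed : ∀ f : ℕ → Fin n, (f 0).val = 0 → (f l).val = 0 → IsWalk S.Adj l f →
      S.walkSign l f = ε ^ l := by
    intro f h0 hl hf
    have hlen := F1Adj.val_add_length (by omega) (hadj ▸ hf)
    rw [h0, hl] at hlen
    rw [S.walkSign_eq hadj hn hrel hf, h0, hl, descSign_self, h₁, h₂, ← pow_mul, ← pow_mul,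
      ← pow_add, one_mul, one_mul]
    congr 1
    omega
  obtain ⟨f, g, ⟨hf0, hft, hf⟩, ⟨hg0, hgt, hg⟩, hne⟩ := hl l le_rfl ⟨0, by omega⟩ ⟨0, by omega⟩
  exact hne ((hclosed f (by simp [hf0]) (by simp [hft]) hf).trans
    (hclosed g (by simp [hg0]) (by simp [hgt]) hg).symm)

lemma hasSSSD_of_le (hadj : S.Adj = F1Adj n) (hn : 4 ≤ n)
    (hne : S.cycleSign 0 (n - 2) ^ (n - 2) ≠ S.cycleSign 0 (n - 3) ^ (n - 1)) (u v : Fin n)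
    {t : ℕ} (ht : 2 * (n - 2) ^ 2 + u + 1 ≤ t) : S.HasSSSD t u v := by
  have hlong := (S.hasSignedWalk_longCycle hadj hn).pow (n - 2)
  have hshort := (S.hasSignedWalk_shortCycle hadj hn).pow (n - 1)
  rw [mul_comm] at hshort
  obtain ⟨y, hy, rfl⟩ : ∃ y, (n - 2) * (n - 3) < y ∧ t = u + (n - 2) * (n - 1) + y := by
    obtain ⟨c, rfl⟩ : ∃ c, n = c + 4 := ⟨n - 4, by omega⟩
    simp only [show c + 4 - 1 = c + 3 from rfl, show c + 4 - 2 = c + 2 from rfl,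
      show c + 4 - 3 = c + 1 from rfl] at ht ⊢
    have : 2 * (c + 2) ^ 2 = (c + 2) * (c + 3) + (c + 2) * (c + 1) := by ring
    exact ⟨t - (u + (c + 2) * (c + 3)), by omega, by omega⟩
  exact S.hasSSSD_of_hub (hadj ▸ F1Adj.hasWalk_desc (w := ⟨0, by omega⟩) (Nat.zero_le _))
    hlong hshort hne (hadj ▸ F1Adj.hasWalk_from_zero hn v hy)

/-- A walk from `u` to `v_{n-1}` of length `2(n-2)² + u` closes exactly `n - 2` cycles of each
length, so its sign is determined. -/
lemma not_hasSSSD_critical (hadj : S.Adj = F1Adj n) (hn : 4 ≤ n)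
    (hrel : S.cycleSign 1 (n - 1) = S.cycleSign 0 (n - 2)) (u : Fin n) :
    ¬ S.HasSSSD (2 * (n - 2) ^ 2 + u) u ⟨n - 2, by omega⟩ := by
  have hsign : ∀ f : ℕ → Fin n, f 0 = u → f (2 * (n - 2) ^ 2 + u) = ⟨n - 2, by omega⟩ →
      IsWalk S.Adj (2 * (n - 2) ^ 2 + u) f →
      S.walkSign (2 * (n - 2) ^ 2 + u) f = S.descSign 0 u * S.descSign 0 (n - 2) *
        (S.cycleSign 0 (n - 2) ^ (n - 2) * S.cycleSign 0 (n - 3) ^ (n - 2)) := by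
    rintro f rfl hend hf
    obtain ⟨h₁, h₂⟩ := F1Adj.jumpCount_eq_of_critical hn (hadj ▸ hf) (by rw [hend])
    rw [S.walkSign_eq hadj hn hrel hf, hend, h₁, h₂]
  rintro ⟨f, g, ⟨hf0, hft, hf⟩, ⟨hg0, hgt, hg⟩, hne⟩
  exact hne ((hsign f hf0 hft hf).trans (hsign g hg0 hgt hg).symm)

lemma localBase_eq_of_F1 (hadj : S.Adj = F1Adj n) (hn : 4 ≤ n) (hpn : S.IsPrimitiveNonpowerful)
    (h1 : S.SameSignCycles (n - 1)) (u : Fin n) : S.localBase u = 2 * (n - 2) ^ 2 + u + 1 := by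
  have hrel := S.cycleSign_one_eq hadj hn h1
  exact S.localBase_eq_succ
    (fun t ht v => S.hasSSSD_of_le hadj hn (S.cycleSign_pow_ne hadj hn hrel hpn) u v ht)
    (S.not_hasSSSD_critical hadj hn hrel u)

end SignedDigraph

/-- Let `n ≥ 6` and let `𝒮₁` be a primitive nonpowerful signed
digraph with underlying digraph `F₁`, in which all cycles of length `n-1` have
the same sign and all cycles of length `n-2` have the same sign. Then
`l(k) = l(v_k) = 2n²-8n+8+k` for every `1 ≤ k ≤ n`. -/
theorem stmt5 (n : ℕ) (hn : 6 ≤ n)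
    (S : SignedDigraph (Fin n)) (hadj : S.Adj = F1Adj n)
    (hpn : S.IsPrimitiveNonpowerful)
    (h1 : S.SameSignCycles (n - 1)) :
    ∀ k : ℕ, ∀ _hk1 : 1 ≤ k, ∀ _hk2 : k ≤ n,
      kthSmallest S.localBase k = S.localBase ⟨k - 1, by omega⟩ ∧
      S.localBase ⟨k - 1, by omega⟩ = 2 * n ^ 2 - 8 * n + 8 + k := by
  intro k hk1 hk2
  have hbase := S.localBase_eq_of_F1 hadj (by omega) hpn h1
  have hmono : Monotone S.localBase := fun u w huw => by
    rw [hbase, hbase]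
    exact Nat.add_le_add_right (Nat.add_le_add_left huw _) _
  refine ⟨by simpa [Nat.sub_add_cancel hk1] using
    kthSmallest_of_monotone hmono ⟨k - 1, by omega⟩, ?_⟩
  rw [hbase]
  obtain ⟨m, rfl⟩ : ∃ m, n = m + 2 := ⟨n - 2, by omega⟩
  have hsq : 2 * (m + 2) ^ 2 = 2 * m ^ 2 + 8 * m + 8 := by ring
  have hm : 8 ≤ 2 * m ^ 2 := by nlinarith
  simp only [Nat.add_sub_cancel, hsq]
  omega
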